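/- arXiv:math/0107082 — 5 statements merged into one kernel-verified Lean document; each statement's English description precedes it below -/
import Mathlib

section
/- For every p ∈ ℕ, a ∈ ℝ, b ≠ 0, and q ∈ ℝ: ∑_{r=0}^{p} (-1)^r C(p+1, r+1) q^{p-r} B_{r+1}(a+bq) / b^{r+1} = q^{p+1} + (-1)^p B_{p+1}(a)/b^{p+1}, where B_m denotes the m-th Bernoulli polynomial. -/
/-- The `m`-th Bernoulli polynomial, evaluated at a real number. -/
noncomputable def bernoulliPoly (m : ℕ) (x : ℝ) : ℝ :=
  Polynomial.eval x ((Polynomial.bernoulli m).map (algebraMap ℚ ℝ))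

/-!
Taylor expansion of `Bₙ` at `x`, together with `Bₙ' = n Bₙ₋₁`, gives the addition formula
`Bₙ(x + h) = ∑ₖ C(n,k) Bₖ(x) hⁿ⁻ᵏ`. Taking `n = p + 1`, `x = a + bq`, `h = -bq`, multiplying by `(-1)ᵖ`
and splitting off the `k = 0` term gives `bᵖ⁺¹` times the identity.
-/

open Finset

namespace Polynomial

theorem hasseDeriv_map {R S : Type*} [Semiring R] [Semiring S] (f : R →+* S) (k : ℕ) (p : R[X]) :
    hasseDeriv k (p.map f) = (hasseDeriv k p).map f := by
  ext n
  simp [hasseDeriv_coeff, coeff_map]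

theorem natDegree_bernoulli_le (n : ℕ) : (bernoulli n).natDegree ≤ n :=
  natDegree_le_iff_coeff_eq_zero.mpr fun i hi => by
    rw [coeff_bernoulli, if_neg (by exact_mod_cast hi.not_ge)]

theorem iterate_derivative_bernoulli (k n : ℕ) :
    derivative^[k] (bernoulli n) = n.descFactorial k • bernoulli (n - k) := by
  induction k with
  | zero => simp
  | succ k ih =>
    rw [Function.iterate_succ_apply', ih, derivative_smul, derivative_bernoulli, ← nsmul_eq_mul,
      smul_smul, Nat.descFactorial_succ, Nat.sub_sub, mul_comm]

theorem hasseDeriv_bernoulli (k n : ℕ) :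
    hasseDeriv k (bernoulli n) = n.choose k • bernoulli (n - k) := by
  have h := congrFun (factorial_smul_hasseDeriv (R := ℚ) (k := k)) (bernoulli n)
  rw [iterate_derivative_bernoulli, Nat.descFactorial_eq_factorial_mul_choose, mul_smul] at h
  exact smul_right_injective _ (Nat.factorial_ne_zero k) h

theorem eval_map_bernoulli_add {R : Type*} [CommRing R] (f : ℚ →+* R) (n : ℕ) (x y : R) :
    ((bernoulli n).map f).eval (x + y)
      = ∑ k ∈ range (n + 1), n.choose k * ((bernoulli k).map f).eval x * y ^ (n - k) := by
  have hdeg : (taylor x ((bernoulli n).map f)).natDegree < n + 1 := by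
    rw [natDegree_taylor]
    exact Nat.lt_succ_of_le ((natDegree_map_le).trans (natDegree_bernoulli_le n))
  rw [add_comm, ← taylor_eval, eval_eq_sum_range' hdeg, ← sum_range_reflect]
  refine sum_congr rfl fun k hk => ?_
  have hk : k ≤ n := Nat.lt_succ_iff.mp (mem_range.mp hk)
  rw [taylor_coeff, hasseDeriv_map, hasseDeriv_bernoulli, nsmul_eq_mul, Polynomial.map_mul,
    Polynomial.map_natCast, eval_mul, eval_natCast, add_tsub_cancel_right, Nat.choose_symm hk,
    Nat.sub_sub_self hk]

end Polynomial

theorem bernoulliPoly_zero (x : ℝ) : bernoulliPoly 0 x = 1 := by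
  simp [bernoulliPoly]

theorem bernoulliPoly_add (m : ℕ) (x y : ℝ) :
    bernoulliPoly m (x + y)
      = ∑ k ∈ range (m + 1), m.choose k * bernoulliPoly k x * y ^ (m - k) :=
  Polynomial.eval_map_bernoulli_add _ m x y

theorem neg_one_pow_mul_neg_pow_sub {R : Type*} [Ring R] {p r : ℕ} (hr : r ≤ p) (y : R) :
    (-1 : R) ^ p * (-y) ^ (p - r) = (-1) ^ r * y ^ (p - r) := by
  rw [neg_pow y, ← mul_assoc, ← pow_add, show p + (p - r) = r + 2 * (p - r) by omega, pow_add,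
    pow_mul, neg_one_sq, one_pow, mul_one]

theorem sum_neg_one_pow_mul_choose_mul_bernoulliPoly (p : ℕ) (x y : ℝ) :
    ∑ r ∈ range (p + 1), (-1 : ℝ) ^ r * (p + 1).choose (r + 1) * y ^ (p - r)
        * bernoulliPoly (r + 1) x
      = y ^ (p + 1) + (-1 : ℝ) ^ p * bernoulliPoly (p + 1) (x - y) := by
  have hlast : (-1 : ℝ) ^ p * (-y) ^ (p + 1) = -y ^ (p + 1) := by
    rw [neg_pow y, ← mul_assoc, ← pow_add, show p + (p + 1) = 2 * p + 1 by omega, pow_succ,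
      pow_mul]
    simp
  rw [sub_eq_add_neg, bernoulliPoly_add, sum_range_succ' _ (p + 1), mul_add, mul_sum,
    Nat.choose_zero_right, bernoulliPoly_zero, Nat.cast_one, one_mul, one_mul, Nat.sub_zero, hlast,
    add_comm _ (-_), ← add_assoc, add_neg_cancel, zero_add]
  refine sum_congr rfl fun r hr => ?_
  rw [Nat.add_sub_add_right, mul_comm _ ((-y) ^ _), ← mul_assoc,
    neg_one_pow_mul_neg_pow_sub (Nat.lt_succ_iff.mp (mem_range.mp hr))]
  ring

/-- Lemma 4.1: for `p ∈ ℕ`, `a ∈ ℝ`, `b ≠ 0`, `q ∈ ℝ`,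
`∑_{r=0}^{p} (-1)^r C(p+1,r+1) q^{p-r} B_{r+1}(a+bq) / b^{r+1}
 = q^{p+1} + (-1)^p B_{p+1}(a) / b^{p+1}`. -/
theorem bernoulli_sum_identity (p : ℕ) (a b q : ℝ) (hb : b ≠ 0) :
    ∑ r ∈ Finset.range (p + 1), (-1 : ℝ) ^ r * (Nat.choose (p + 1) (r + 1)) *
        q ^ (p - r) * bernoulliPoly (r + 1) (a + b * q) / b ^ (r + 1)
      = q ^ (p + 1) + (-1 : ℝ) ^ p * bernoulliPoly (p + 1) a / b ^ (p + 1) := by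
  calc _ = (∑ r ∈ range (p + 1), (-1 : ℝ) ^ r * (p + 1).choose (r + 1) * (b * q) ^ (p - r)
          * bernoulliPoly (r + 1) (a + b * q)) / b ^ (p + 1) := by
        rw [sum_div]
        refine sum_congr rfl fun r hr => ?_
        have hr : r ≤ p := Nat.lt_succ_iff.mp (mem_range.mp hr)
        rw [show b ^ (p + 1) = b ^ (p - r) * b ^ (r + 1) by rw [← pow_add]; congr 1; omega,
          mul_pow]
        field_simp
    _ = ((b * q) ^ (p + 1) + (-1 : ℝ) ^ p * bernoulliPoly (p + 1) a) / b ^ (p + 1) := by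
        rw [sum_neg_one_pow_mul_choose_mul_bernoulliPoly, add_sub_cancel_right]
    _ = _ := by
        rw [add_div, mul_pow, mul_div_cancel_left₀ _ (pow_ne_zero _ hb)]
end

section
/- For m, n ∈ ℕ, a ∈ ℝ, b ≠ 0, the function q ↦ (n! m!/(n+m+1)!) ∑_{j=0}^{n} (-1)^j q^{n-j} b^{-(j+1)} C(m+n+1, n-j) B_{m+j+1}(a+bq) is an antiderivative of q ↦ q^n B_m(a+bq) on ℝ. -/
open Finset

theorem hasDerivAt_sum_alternating_descFactorial_mul_pow_mul {𝕜 : Type*}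
    [NontriviallyNormedField 𝕜] (F : ℕ → 𝕜 → 𝕜) (hF : ∀ k t, HasDerivAt (F (k + 1)) (F k t) t)
    (n : ℕ) (q : 𝕜) :
    HasDerivAt (fun t => ∑ j ∈ range (n + 1), (-1) ^ j * (n.descFactorial j : 𝕜) * t ^ (n - j) *
      F (j + 1) t) (q ^ n * F 0 q) q := by
  set g : ℕ → 𝕜 := fun j => (-1) ^ j * (n.descFactorial j : 𝕜) * q ^ (n - j) * F j q
  have hterm : ∀ j ∈ range (n + 1), HasDerivAt
      (fun t => (-1) ^ j * (n.descFactorial j : 𝕜) * t ^ (n - j) * F (j + 1) t)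
      (g j - g (j + 1)) q := by
    intro j _
    refine (((hasDerivAt_pow (n - j) q).const_mul ((-1) ^ j * (n.descFactorial j : 𝕜))).mul
      (hF j q)).congr_deriv ?_
    simp only [g, Nat.descFactorial_succ, Nat.sub_add_eq]
    push_cast
    ring
  have hlast : g (n + 1) = 0 := by simp [g]
  refine (HasDerivAt.fun_sum hterm).congr_deriv ?_
  rw [sum_range_sub', hlast]
  simp [g]

theorem hasDerivAt_bernoulliPoly_succ (k : ℕ) (x : ℝ) :
    HasDerivAt (bernoulliPoly (k + 1)) ((k + 1) * bernoulliPoly k x) x := by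
  refine (Polynomial.hasDerivAt
    ((Polynomial.bernoulli (k + 1)).map (algebraMap ℚ ℝ)) x).congr_deriv ?_
  rw [Polynomial.derivative_map, Polynomial.derivative_bernoulli_add_one]
  simp [bernoulliPoly, Polynomial.eval_map]

noncomputable def scaledBernoulli (m : ℕ) (a b : ℝ) (j : ℕ) (t : ℝ) : ℝ :=
  m.factorial / ((m + j).factorial * b ^ j) * bernoulliPoly (m + j) (a + b * t)

theorem hasDerivAt_scaledBernoulli_succ (m : ℕ) {a b : ℝ} (hb : b ≠ 0) (j : ℕ) (t : ℝ) :
    HasDerivAt (scaledBernoulli m a b (j + 1)) (scaledBernoulli m a b j t) t := by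
  have hlin : HasDerivAt (fun t : ℝ => a + b * t) b t := by
    simpa using ((hasDerivAt_id t).const_mul b).const_add a
  refine (((hasDerivAt_bernoulliPoly_succ (m + j) (a + b * t)).comp t hlin).const_mul
    ((m.factorial : ℝ) / ((m + (j + 1)).factorial * b ^ (j + 1)))).congr_deriv ?_
  simp only [scaledBernoulli, ← add_assoc, Nat.factorial_succ]
  push_cast
  field_simp
  ring

theorem factorial_mul_factorial_div_mul_choose {m n j : ℕ} (hj : j ≤ n) :
    (n.factorial : ℝ) * m.factorial / (n + m + 1).factorial * (m + n + 1).choose (n - j) =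
      n.descFactorial j * (m.factorial / (m + j + 1).factorial) := by
  have hchoose := Nat.choose_mul_factorial_mul_factorial (show n - j ≤ m + n + 1 by omega)
  have hdesc := Nat.factorial_mul_descFactorial hj
  rw [show m + n + 1 = n + m + 1 by omega] at hchoose ⊢
  rw [show n + m + 1 - (n - j) = m + j + 1 by omega] at hchoose
  have hchoose_ne : ((n + m + 1).choose (n - j) : ℝ) ≠ 0 := by
    exact_mod_cast (Nat.choose_pos (by omega)).ne'
  rw [← hchoose, ← hdesc]
  push_cast
  field_simp

/-- The moments of the Bernoulli polynomials: the displayed finite sum is an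
antiderivative of `q ↦ qⁿ B_m(a + b q)` on `ℝ`. -/
theorem bernoulli_moments (m n : ℕ) (a b : ℝ) (hb : b ≠ 0) (q : ℝ) :
    HasDerivAt (fun t : ℝ =>
        ((n.factorial : ℝ) * m.factorial / (n + m + 1).factorial) *
          ∑ j ∈ Finset.range (n + 1), (-1 : ℝ) ^ j * t ^ (n - j) / b ^ (j + 1) *
            (Nat.choose (m + n + 1) (n - j)) * bernoulliPoly (m + j + 1) (a + b * t))
      (q ^ n * bernoulliPoly m (a + b * q)) q := by
  refine ((hasDerivAt_sum_alternating_descFactorial_mul_pow_mul (scaledBernoulli m a b)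
    (hasDerivAt_scaledBernoulli_succ m hb) n q).congr_of_eventuallyEq
      (Filter.Eventually.of_forall fun t => ?_)).congr_deriv ?_
  · rw [mul_sum]
    refine sum_congr rfl fun j hj => ?_
    have hcoef := factorial_mul_factorial_div_mul_choose (m := m)
      (Nat.lt_succ_iff.mp (mem_range.mp hj))
    simp only [scaledBernoulli, ← add_assoc]
    linear_combination
      ((-1) ^ j * t ^ (n - j) / b ^ (j + 1) * bernoulliPoly (m + j + 1) (a + b * t)) * hcoef
  · have hm : (m.factorial : ℝ) ≠ 0 := by positivity
    simp [scaledBernoulli, hm]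
end

section
/- For m ∈ ℕ, a, b ∈ ℝ with b = 1 (or general b): the function q ↦ m! e^q (-1)^m ∑_{j=0}^{m} ((-1)^j / j!) b^{m-j} B_j(a+bq) is an antiderivative of q ↦ e^q B_m(a+bq). -/
/-!
Repeated integration by parts: if `g' = m b g_{m-1}` (an Appell sequence, such as
`t ↦ B_m(a + b t)`), then `G_m = g_m - m b G_{m-1}` with `(e^t G_{m-1})' = e^t g_{m-1}` gives
`(e^t G_m)' = e^t g_m + e^t m b g_{m-1} - m b e^t g_{m-1} = e^t g_m`. Unfolding the recursion
yields the closed form `G_m = m! (-1)^m ∑_{j ≤ m} ((-1)^j / j!) b^{m-j} g_j`.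
-/

open Finset

theorem hasDerivAt_bernoulliPoly (j : ℕ) (x : ℝ) :
    HasDerivAt (bernoulliPoly j) (j * bernoulliPoly (j - 1) x) x := by
  have hderiv : Polynomial.derivative ((Polynomial.bernoulli j).map (algebraMap ℚ ℝ)) =
      (j : Polynomial ℝ) * (Polynomial.bernoulli (j - 1)).map (algebraMap ℚ ℝ) := by
    rw [Polynomial.derivative_map, Polynomial.derivative_bernoulli, Polynomial.map_mul,
      Polynomial.map_natCast]
  have h := Polynomial.hasDerivAt ((Polynomial.bernoulli j).map (algebraMap ℚ ℝ)) x
  rwa [hderiv, Polynomial.eval_mul, Polynomial.eval_natCast] at h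

theorem hasDerivAt_bernoulliPoly_affine (j : ℕ) (a b q : ℝ) :
    HasDerivAt (fun t => bernoulliPoly j (a + b * t))
      (j * b * bernoulliPoly (j - 1) (a + b * q)) q := by
  have haffine : HasDerivAt (fun t : ℝ => a + b * t) b q := by
    simpa using ((hasDerivAt_id q).const_mul b).const_add a
  rw [mul_right_comm]
  exact (hasDerivAt_bernoulliPoly j (a + b * q)).comp q haffine

section Appell

variable (g : ℕ → ℝ → ℝ) (b : ℝ)

/-- `∑_k (-1)^k g_m^{(k)}` for an Appell sequence `g' = m b g_{m-1}`. -/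
noncomputable def appellAlternatingSum (m : ℕ) (t : ℝ) : ℝ :=
  m.factorial * (-1) ^ m * ∑ j ∈ range (m + 1), ((-1) ^ j / j.factorial) * b ^ (m - j) * g j t

theorem appellAlternatingSum_zero (t : ℝ) : appellAlternatingSum g b 0 t = g 0 t := by
  simp [appellAlternatingSum]

theorem appellAlternatingSum_succ (n : ℕ) (t : ℝ) :
    appellAlternatingSum g b (n + 1) t =
      g (n + 1) t - (n + 1) * b * appellAlternatingSum g b n t := by
  have hterm : ∀ j ∈ range (n + 1), ((-1) ^ j / j.factorial) * b ^ (n + 1 - j) * g j t =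
      b * (((-1) ^ j / j.factorial) * b ^ (n - j) * g j t) := by
    intro j hj
    rw [Nat.sub_add_comm (mem_range_succ_iff.mp hj), pow_succ]
    ring
  rw [appellAlternatingSum, appellAlternatingSum, sum_range_succ, sum_congr rfl hterm,
    ← mul_sum, Nat.sub_self, Nat.factorial_succ]
  have hsq : ((-1 : ℝ) ^ (n + 1)) ^ 2 = 1 := by rw [← pow_mul, pow_mul', neg_one_sq, one_pow]
  field_simp
  push_cast
  linear_combination g (n + 1) t * hsq

variable {g b}

theorem hasDerivAt_exp_mul_appellAlternatingSum {q : ℝ}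
    (hg : ∀ j, HasDerivAt (g j) (j * b * g (j - 1) q) q) (m : ℕ) :
    HasDerivAt (fun t => Real.exp t * appellAlternatingSum g b m t) (Real.exp q * g m q) q := by
  induction m with
  | zero =>
    simpa [appellAlternatingSum_zero] using (Real.hasDerivAt_exp q).fun_mul (hg 0)
  | succ n ih =>
    have hsucc := hg (n + 1)
    rw [Nat.add_sub_cancel] at hsucc
    have hrec : (fun t => Real.exp t * appellAlternatingSum g b (n + 1) t) = fun t =>
        Real.exp t * g (n + 1) t - (n + 1) * b * (Real.exp t * appellAlternatingSum g b n t) := by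
      funext t
      rw [appellAlternatingSum_succ]
      ring
    rw [hrec]
    exact (((Real.hasDerivAt_exp q).fun_mul hsucc).fun_sub (ih.const_mul ((n + 1) * b))).congr_deriv
      (by push_cast; ring)

end Appell

/-- `q ↦ m! e^q (-1)^m ∑_{j=0}^{m} ((-1)^j/j!) b^{m-j} B_j(a+bq)` is an
antiderivative of `q ↦ e^q B_m(a+bq)`. -/
theorem exp_bernoulli_antideriv (m : ℕ) (a b : ℝ) (q : ℝ) :
    HasDerivAt (fun t : ℝ =>
        (m.factorial : ℝ) * Real.exp t * (-1 : ℝ) ^ m *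
          ∑ j ∈ Finset.range (m + 1), ((-1 : ℝ) ^ j / j.factorial) * b ^ (m - j) *
            bernoulliPoly j (a + b * t))
      (Real.exp q * bernoulliPoly m (a + b * q)) q := by
  have h := hasDerivAt_exp_mul_appellAlternatingSum
    (g := fun j t => bernoulliPoly j (a + b * t)) (b := b)
    (fun j => hasDerivAt_bernoulliPoly_affine j a b q) m
  convert h using 2 with t
  rw [appellAlternatingSum]
  ring
end

section
/- For k ∈ ℕ with k ≥ 2, A_k(1/2) = (-1)^{k-1} B_k 2^{1-k} ln 2 - (1 - 2^{1-k}) k ζ'(1-k), where A_k(q) = k ζ'(1-k, q), B_k is the k-th Bernoulli number, and ζ' is the derivative of the Riemann zeta function. -/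
open Complex

/-!
For `1 < re s`, splitting `ζ(s) = ∑ n⁻ˢ` into even and odd `n` gives
`∑ (n + 1/2)⁻ˢ = 2ˢ ∑ (2n + 1)⁻ˢ = (2ˢ - 1) ζ(s)`. Both sides are analytic off `s = 1`, so by
the identity theorem `F(·, 1/2) = (2ˢ - 1) ζ` on `ℂ \ {1}`. Differentiating the product at
`s = 1 - k` and inserting `ζ(1 - k) = (-1)^(k-1) B_k / k` gives the formula.
-/

theorem hasSum_one_div_two_mul_add_one_cpow {s : ℂ} (hs : 1 < s.re) :
    HasSum (fun n : ℕ => 1 / (2 * n + 1 : ℂ) ^ s) ((1 - 2 ^ (-s)) * riemannZeta s) := by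
  set f : ℕ → ℂ := fun n => 1 / (n : ℂ) ^ s
  have hf : HasSum f (riemannZeta s) := by
    rw [zeta_eq_tsum_one_div_nat_cpow hs]
    exact (summable_one_div_nat_cpow.mpr hs).hasSum
  have heven : HasSum (fun k => f (2 * k)) (2 ^ (-s) * riemannZeta s) := by
    refine (hf.mul_left _).congr_fun fun k => ?_
    simp only [f, Nat.cast_mul, Nat.cast_ofNat, cpow_neg]
    rw [← Nat.cast_ofNat, natCast_mul_natCast_cpow]
    field_simp
  have hodd : Summable fun k => f (2 * k + 1) :=
    hf.summable.comp_injective fun a b h => by omega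
  have hsplit := (heven.even_add_odd hodd.hasSum).unique hf
  convert hodd.hasSum using 1
  · simp [f]
  · linear_combination -hsplit

theorem hasSum_one_div_nat_add_half_cpow {s : ℂ} (hs : 1 < s.re) :
    HasSum (fun n : ℕ => 1 / (n + 1 / 2 : ℂ) ^ s) ((2 ^ s - 1) * riemannZeta s) := by
  have h2 : (2 : ℂ) ^ s ≠ 0 := by simp [cpow_eq_zero_iff]
  have h := (hasSum_one_div_two_mul_add_one_cpow hs).mul_left (2 ^ s)
  rw [← mul_assoc, mul_sub, mul_one, ← cpow_add _ _ two_ne_zero, add_neg_cancel, cpow_zero] at h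
  refine h.congr_fun fun n => ?_
  have hcast : (2 * n + 1 : ℂ) = ((2 : ℝ) : ℂ) * ((n + 1 / 2 : ℝ) : ℂ) := by push_cast; ring
  rw [hcast, mul_cpow_ofReal_nonneg (by norm_num) (by positivity)]
  push_cast
  field_simp

theorem eqOn_compl_one_of_eq_of_one_lt_re {f g : ℂ → ℂ} (hf : AnalyticOnNhd ℂ f {1}ᶜ)
    (hg : AnalyticOnNhd ℂ g {1}ᶜ) (hfg : ∀ z : ℂ, 1 < z.re → f z = g z) :
    Set.EqOn f g {1}ᶜ := by
  have hconn : IsPreconnected ({1}ᶜ : Set ℂ) :=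
    (isConnected_compl_singleton_of_one_lt_rank (by simp) 1).isPreconnected
  refine hf.eqOn_of_preconnected_of_eventuallyEq hg hconn (z₀ := 2) (by norm_num) ?_
  have hU : {z : ℂ | 1 < z.re} ∈ nhds 2 :=
    (isOpen_lt continuous_const continuous_re).mem_nhds (by simp)
  filter_upwards [hU] with z hz using hfg z hz

theorem hasDerivAt_two_cpow_sub_one_mul_riemannZeta {s : ℂ} (hs : s ≠ 1) :
    HasDerivAt (fun z => (2 ^ z - 1) * riemannZeta z)
      (2 ^ s * log 2 * riemannZeta s + (2 ^ s - 1) * deriv riemannZeta s) s :=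
  (((hasStrictDerivAt_const_cpow (Or.inl two_ne_zero)).hasDerivAt.sub_const 1).mul
    (differentiableAt_riemannZeta hs).hasDerivAt)

theorem riemannZeta_one_sub_natCast {k : ℕ} (hk : k ≠ 0) :
    riemannZeta (1 - k) = (-1) ^ (k - 1) * bernoulli k / k := by
  obtain ⟨j, rfl⟩ := Nat.exists_eq_add_one_of_ne_zero hk
  simpa using riemannZeta_neg_nat_eq_bernoulli j

theorem analyticOnNhd_two_cpow_sub_one_mul_riemannZeta :
    AnalyticOnNhd ℂ (fun z => (2 ^ z - 1) * riemannZeta z) {1}ᶜ :=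
  DifferentiableOn.analyticOnNhd (fun _ hs =>
    (hasDerivAt_two_cpow_sub_one_mul_riemannZeta hs).differentiableAt.differentiableWithinAt)
    isOpen_compl_singleton

/-- Let `F z q` be (any) analytic continuation in `z` of the Hurwitz zeta function
`ζ(z,q)` for each fixed `q > 0`.  For `k ≥ 2`, with `A_k(q) := k · ∂ζ/∂z(1-k, q)`,
`A_k(1/2) = (-1)^{k-1} B_k 2^{1-k} ln 2 - (1 - 2^{1-k}) k ζ'(1-k)`. -/
theorem Ak_at_half (F : ℂ → ℝ → ℂ)
    (hF : ∀ q : ℝ, 0 < q → AnalyticOn ℂ (fun z => F z q) {(1 : ℂ)}ᶜ)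
    (hFeq : ∀ z : ℂ, 1 < z.re → ∀ q : ℝ, 0 < q →
      F z q = ∑' n : ℕ, 1 / ((n : ℂ) + (q : ℂ)) ^ z)
    (k : ℕ) (hk : 2 ≤ k) :
    (k : ℂ) * deriv (fun z => F z (1 / 2)) (1 - k) =
      (-1 : ℂ) ^ (k - 1) * (bernoulli k : ℂ) * (2 : ℂ) ^ (1 - (k : ℂ)) * Real.log 2 -
        (1 - (2 : ℂ) ^ (1 - (k : ℂ))) * (k : ℂ) * deriv riemannZeta (1 - k) := by
  have hk0 : (k : ℂ) ≠ 0 := by norm_cast; omega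
  have hs : (1 - k : ℂ) ∈ ({1}ᶜ : Set ℂ) := by simpa using hk0
  have hFg : Set.EqOn (fun z => F z (1 / 2)) (fun z => (2 ^ z - 1) * riemannZeta z) {1}ᶜ := by
    refine eqOn_compl_one_of_eq_of_one_lt_re
      (isOpen_compl_singleton.analyticOn_iff_analyticOnNhd.mp (hF _ one_half_pos))
      analyticOnNhd_two_cpow_sub_one_mul_riemannZeta fun z hz => ?_
    rw [hFeq z hz _ one_half_pos, ← (hasSum_one_div_nat_add_half_cpow hz).tsum_eq]
    push_cast
    rfl
  rw [(hFg.eventuallyEq_of_mem (isOpen_compl_singleton.mem_nhds hs)).deriv_eq,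
    (hasDerivAt_two_cpow_sub_one_mul_riemannZeta hs).deriv,
    riemannZeta_one_sub_natCast (by omega),
    ← ofReal_ofNat, ← ofReal_log zero_le_two]
  field_simp
  ring
end

section
/- For Re z < 0, ∫₀¹ ζ(z,q) dq = 0, where ζ(z,q) is the analytic continuation of the Hurwitz zeta function. -/
/-!
By uniqueness of analytic continuation, `F z q = ζ(z, q)` for `q ∈ (0, 1]`. Writing `z = 1 - s`
with `Re s > 1`, Hurwitz's functional equation expresses `ζ(1 - s, q)` through the absolutely
convergent Fourier series `expZeta (±q) s = ∑_{n ≥ 1} e^{±2πinq} n^{-s}`. Every mode has mean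
zero over a period, so integrating term by term (dominated by `∑ n^{-Re s}`) gives `0`.
-/

open Complex

namespace HurwitzZeta

open MeasureTheory Set Real

theorem eqOn_hurwitzZeta_of_eq_tsum {a : ℝ} (ha : a ∈ Icc 0 1) {g : ℂ → ℂ}
    (hg : AnalyticOn ℂ g {1}ᶜ)
    (hg_eq : ∀ s : ℂ, 1 < s.re → g s = ∑' n : ℕ, 1 / ((n : ℂ) + a) ^ s) :
    EqOn g (hurwitzZeta a) {1}ᶜ := by
  have hζ : AnalyticOnNhd ℂ (hurwitzZeta a) {1}ᶜ :=
    DifferentiableOn.analyticOnNhd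
      (fun s hs ↦ (differentiableAt_hurwitzZeta a hs).differentiableWithinAt)
      isOpen_compl_singleton
  have h_near_two : g =ᶠ[nhds 2] hurwitzZeta a := by
    filter_upwards [(continuous_re.isOpen_preimage _ isOpen_Ioi).mem_nhds
      (show (2 : ℂ) ∈ re ⁻¹' Ioi 1 by norm_num)] with s hs
    rw [hg_eq s hs, (hasSum_hurwitzZeta_of_one_lt_re ha hs).tsum_eq]
  exact (isOpen_compl_singleton.analyticOn_iff_analyticOnNhd.mp hg)
    |>.eqOn_of_preconnected_of_eventuallyEq hζ
      (isConnected_compl_singleton_of_one_lt_rank (by simp) _).isPreconnected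
      (by norm_num) h_near_two

theorem norm_cexp_two_pi_I_mul_div_natCast_cpow_le (a : ℝ) (s : ℂ) (n : ℕ) :
    ‖cexp (2 * π * I * a * n) / (n : ℂ) ^ s‖ ≤ (n : ℝ) ^ (-s.re) := by
  have h_exp : ‖cexp (2 * π * I * a * n)‖ = 1 := by
    rw [show 2 * π * I * a * n = ((2 * π * a * n : ℝ) : ℂ) * I by push_cast; ring]
    exact norm_exp_ofReal_mul_I _
  rw [norm_div, h_exp]
  rcases Nat.eq_zero_or_pos n with rfl | hn
  · rcases eq_or_ne s 0 with rfl | hs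
    · simp
    · simp [zero_cpow hs, Real.rpow_nonneg]
  · rw [norm_natCast_cpow_of_pos hn, Real.rpow_neg n.cast_nonneg, one_div]

theorem integral_cexp_two_pi_I_mul_intCast_eq_zero {n : ℤ} (hn : n ≠ 0) :
    ∫ a in (0 : ℝ)..1, cexp (2 * π * I * a * n) = 0 := by
  have hc : 2 * π * I * n ≠ 0 := by simp [Real.pi_ne_zero, I_ne_zero, hn]
  simp_rw [show ∀ a : ℝ, 2 * π * I * a * n = 2 * π * I * n * a from fun a ↦ by ring]
  rw [integral_exp_mul_complex hc]
  simp [show 2 * π * I * n = n * (2 * π * I) by ring, exp_int_mul_two_pi_mul_I]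

theorem integral_expZeta_eq_zero {s : ℂ} (hs : 1 < s.re) :
    ∫ a in (0 : ℝ)..1, expZeta a s = 0 := by
  have h_terms := intervalIntegral.hasSum_integral_of_dominated_convergence
    (μ := volume) (a := 0) (b := 1)
    (F := fun (n : ℕ) (a : ℝ) ↦ cexp (2 * π * I * a * n) / (n : ℂ) ^ s)
    (fun n _ ↦ (n : ℝ) ^ (-s.re)) (fun n ↦ by fun_prop)
    (fun n ↦ ae_of_all _ fun a _ ↦ norm_cexp_two_pi_I_mul_div_natCast_cpow_le a s n)
    (ae_of_all _ fun _ _ ↦ Real.summable_nat_rpow.mpr (by linarith))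
    intervalIntegrable_const
    (ae_of_all _ fun a _ ↦ hasSum_expZeta_of_one_lt_re a hs)
  refine h_terms.unique ?_
  convert hasSum_zero with n
  rw [intervalIntegral.integral_div]
  rcases eq_or_ne n 0 with rfl | hn
  · simp [zero_cpow (ne_zero_of_one_lt_re hs)]
  · simpa using congrArg (· / (n : ℂ) ^ s)
      (integral_cexp_two_pi_I_mul_intCast_eq_zero (n := n) (by simpa))

theorem continuous_expZeta_of_one_lt_re {s : ℂ} (hs : 1 < s.re) :
    Continuous fun a : ℝ ↦ expZeta a s := by
  simp_rw [← fun a : ℝ ↦ (hasSum_expZeta_of_one_lt_re a hs).tsum_eq]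
  exact continuous_tsum (fun n ↦ by fun_prop) (Real.summable_nat_rpow.mpr (by linarith))
    fun n a ↦ norm_cexp_two_pi_I_mul_div_natCast_cpow_le a s n

theorem integral_expZeta_neg_eq_zero {s : ℂ} (hs : 1 < s.re) :
    ∫ a in (0 : ℝ)..1, expZeta (-a) s = 0 := by
  have h_reflect : ∀ a : ℝ, expZeta (-a) s = expZeta ↑(1 - a) s := fun a ↦ by
    rw [AddCircle.coe_sub, AddCircle.coe_period, zero_sub]
  simp_rw [h_reflect]
  rw [intervalIntegral.integral_comp_sub_left (fun a : ℝ ↦ expZeta a s) 1]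
  simpa using integral_expZeta_eq_zero hs

theorem integral_hurwitzZeta_one_sub_eq_zero {s : ℂ} (hs : 1 < s.re) :
    ∫ a in (0 : ℝ)..1, hurwitzZeta a (1 - s) = 0 := by
  have hs_ne_neg : ∀ n : ℕ, s ≠ -n := fun n h ↦ by
    have := congrArg re h
    simp only [neg_re, natCast_re] at this
    linarith [n.cast_nonneg (α := ℝ)]
  have hs_ne_one : s ≠ 1 := by rintro rfl; simp at hs
  simp_rw [hurwitzZeta_one_sub _ hs_ne_neg (Or.inr hs_ne_one)]
  have h_int : IntervalIntegrable (fun a : ℝ ↦ expZeta a s) volume 0 1 :=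
    (continuous_expZeta_of_one_lt_re hs).intervalIntegrable _ _
  have h_int_neg : IntervalIntegrable (fun a : ℝ ↦ expZeta (-a) s) volume 0 1 :=
    ((continuous_expZeta_of_one_lt_re hs).comp continuous_neg).intervalIntegrable _ _
  rw [intervalIntegral.integral_const_mul, intervalIntegral.integral_add
    (h_int.const_mul _) (h_int_neg.const_mul _), intervalIntegral.integral_const_mul,
    intervalIntegral.integral_const_mul, integral_expZeta_eq_zero hs,
    integral_expZeta_neg_eq_zero hs]
  simp

end HurwitzZeta

/-- Let `F z q` be (any) analytic continuation in `z` of the Hurwitz zeta function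
`ζ(z,q)` for each fixed `q > 0`.  For `Re z < 0`, `∫₀¹ ζ(z,q) dq = 0`. -/
theorem integral_hurwitzZeta (F : ℂ → ℝ → ℂ)
    (hF : ∀ q : ℝ, 0 < q → AnalyticOn ℂ (fun z => F z q) {(1 : ℂ)}ᶜ)
    (hFeq : ∀ z : ℂ, 1 < z.re → ∀ q : ℝ, 0 < q →
      F z q = ∑' n : ℕ, 1 / ((n : ℂ) + (q : ℂ)) ^ z)
    (z : ℂ) (hz : z.re < 0) :
    ∫ q in (0 : ℝ)..1, F z q = 0 := by
  have hz_ne_one : z ≠ 1 := by rintro rfl; norm_num at hz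
  have h_eq : ∀ q ∈ Set.uIoc (0 : ℝ) 1, F z q = HurwitzZeta.hurwitzZeta q z := fun q hq ↦ by
    rw [Set.uIoc_of_le zero_le_one] at hq
    exact HurwitzZeta.eqOn_hurwitzZeta_of_eq_tsum (Set.Ioc_subset_Icc_self hq) (hF q hq.1)
      (fun s hs ↦ hFeq s hs q hq.1) hz_ne_one
  rw [intervalIntegral.integral_congr_ae (MeasureTheory.ae_of_all _ h_eq), ← sub_sub_cancel 1 z]
  exact HurwitzZeta.integral_hurwitzZeta_one_sub_eq_zero (by rw [sub_re, one_re]; linarith)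
end
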